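/- For the last-touch attribution rule, the impression adjacency relation with post-attribution contribution bound enforcement with bound r maps any two adjacent datasets (differing by a single impression) to attributed datasets at ℓ1-distance at most 2r. -/

import Mathlib

/-! Framework for differentially private ad conversion measurement
(Delaney et al., "Differentially Private Ad Conversion Measurement"). -/

structure Impression where
  time : ℕ
  user : ℕ
  pub : ℕ
  adv : ℕ
  id : ℕ
deriving DecidableEq

structure Conversion where
  time : ℕ
  user : ℕ
  adv : ℕ
  id : ℕ
deriving DecidableEq

structure Dataset where
  imps : List Impression
  convs : List Conversion

/-- An attribution rule maps a time-ordered list of impressions and a conversion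
to a list of credits (one per impression). -/
abbrev AttrRule := List Impression → Conversion → List ℝ

/-- A valid attribution rule outputs one nonnegative weight per impression, summing to 1. -/
def ValidRule (a : AttrRule) : Prop :=
  ∀ is c, is ≠ [] →
    (a is c).length = is.length ∧ (a is c).sum = 1 ∧ ∀ w ∈ a is c, (0 : ℝ) ≤ w

/-- Impressions eligible for attribution of conversion `c`: those occurring earlier
with the same user and advertiser. -/
def eligible (D : Dataset) (c : Conversion) : List Impression :=
  D.imps.filter fun i => decide (i.time < c.time ∧ i.user = c.user ∧ i.adv = c.adv)

/-- ℓ₁ distance between attributed datasets. -/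
noncomputable def l1dist (w w' : (Impression × Conversion) →₀ ℝ) : ℝ :=
  (w - w').sum fun _ v => |v|

/-- Impressions and conversions are listed in time order. -/
def SortedDS (D : Dataset) : Prop :=
  D.imps.Pairwise (fun i j => i.time ≤ j.time) ∧
  D.convs.Pairwise (fun c c' => c.time ≤ c'.time)

/-- Inner loop of post-attribution contribution-bound enforcement: each weighted
(impression, conversion) pair is kept only if the remaining bound of its scope covers
the weight, in which case the weight is deducted. -/
noncomputable def applyPairs {σ : Type} [DecidableEq σ] (s : Impression → σ) (c : Conversion) :
    List (Impression × ℝ) → (σ → ℝ) × ((Impression × Conversion) →₀ ℝ) →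
      (σ → ℝ) × ((Impression × Conversion) →₀ ℝ)
  | [], st => st
  | (i, w) :: rest, st =>
      if w ≤ st.1 (s i) then
        applyPairs s c rest
          (Function.update st.1 (s i) (st.1 (s i) - w), st.2 + Finsupp.single (i, c) w)
      else
        applyPairs s c rest st

/-- Attribution with post-attribution contribution bound enforcement (Algorithm 1),
with contribution bounding scope map `s` and contribution bound `r`. -/
noncomputable def postAttr {σ : Type} [DecidableEq σ] (a : AttrRule) (s : Impression → σ)
    (r : ℝ) (D : Dataset) : (Impression × Conversion) →₀ ℝ :=
  (D.convs.foldl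
    (fun st c => applyPairs s c ((eligible D c).zip (a (eligible D c) c)) st)
    ((fun _ => r : σ → ℝ), (0 : (Impression × Conversion) →₀ ℝ))).2

/-- Attribution with pre-attribution contribution bound enforcement (Algorithm 2):
for each conversion, every scope with an eligible impression pays one unit of its bound
if available, otherwise its impressions are excluded from attribution. -/
noncomputable def preAttr {σ : Type} [DecidableEq σ] (a : AttrRule) (s : Impression → σ)
    (r : ℝ) (D : Dataset) : (Impression × Conversion) →₀ ℝ :=
  (D.convs.foldl
    (fun (st : (σ → ℝ) × ((Impression × Conversion) →₀ ℝ)) c =>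
      let el := eligible D c
      let surv := el.filter fun i => decide ((1 : ℝ) ≤ st.1 (s i))
      let scopes := (el.map s).dedup
      ((fun x => if x ∈ scopes ∧ (1 : ℝ) ≤ st.1 x then st.1 x - 1 else st.1 x : σ → ℝ),
        st.2 + ((surv.zip (a surv c)).map fun p => Finsupp.single (p.1, c) p.2).sum))
    ((fun _ => r : σ → ℝ), (0 : (Impression × Conversion) →₀ ℝ))).2

/-- Attribution without any contribution bound enforcement. -/
noncomputable def attrNoCap (a : AttrRule) (D : Dataset) :
    (Impression × Conversion) →₀ ℝ :=
  (D.convs.map fun c =>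
    (((eligible D c).zip (a (eligible D c) c)).map fun p => Finsupp.single (p.1, c) p.2).sum).sum

/-- Adjacency: `D'` results from `D` by adding a single impression (in time order). -/
def AddOneImpression (D D' : Dataset) : Prop :=
  ∃ (i0 : Impression) (l₁ l₂ : List Impression),
    D.imps = l₁ ++ l₂ ∧ D'.imps = l₁ ++ i0 :: l₂ ∧ D.convs = D'.convs

/-- Adjacency: `D` results from `D'` by removing all impressions whose scope (under `si`)
is `v` and all conversions whose scope (under `sc`) is `v`. -/
def RemovesScope {σ : Type} [DecidableEq σ] (si : Impression → σ)
    (sc : Conversion → Option σ) (v : σ) (D D' : Dataset) : Prop :=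
  D.imps = D'.imps.filter (fun i => decide (si i ≠ v)) ∧
  D.convs = D'.convs.filter (fun c => decide (sc c ≠ some v))

/-- First-touch attribution. -/
noncomputable def FTA : AttrRule := fun is _ =>
  match is with
  | [] => []
  | _ :: t => 1 :: t.map fun _ => 0

/-- Last-touch attribution. -/
noncomputable def LTA : AttrRule := fun is _ =>
  match is with
  | [] => []
  | _ :: _ => List.replicate (is.length - 1) 0 ++ [1]

/-- Uniform multi-touch attribution. -/
noncomputable def UNI : AttrRule := fun is _ => is.map fun _ => ((is.length : ℝ))⁻¹

/-- U-shaped attribution. -/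
noncomputable def USH : AttrRule := fun is _ =>
  match is with
  | [] => []
  | [_] => [1]
  | [_, _] => [0.5, 0.5]
  | _ :: _ :: _ :: _ =>
      (0.4 : ℝ) :: (List.replicate (is.length - 2) ((0.2 : ℝ) / ((is.length : ℝ) - 2)) ++ [0.4])

/-- Exponential time decay attribution with half-life `th`. -/
noncomputable def EXPR (th : ℝ) : AttrRule := fun is c =>
  let wt : Impression → ℝ := fun i => (2 : ℝ) ^ (-(((c.time : ℝ) - (i.time : ℝ)) / th))
  is.map fun i => wt i / (is.map wt).sum

/-!
Under last-touch attribution with per-impression bounds, each conversion credits `1` to its last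
eligible impression, provided that impression's remaining bound is at least `1`. Inserting `i0`
changes the target exactly of the conversions for which `i0` is the last eligible impression, and
for all of them the old target is the same impression `ℓ` (the last impression before `i0` with
the same user and advertiser), if any. The two runs coincide up to the first such conversion;
from then on every conversion is either moved from `ℓ` to `i0` or credits, in both runs, a common
impression other than `ℓ` and `i0`. So the bounds agree away from `ℓ` and `i0`, and the ℓ₁ gap is
at most what the first run spends on `ℓ` plus what the second spends on `i0`, i.e. at most `2r`.
-/

open Finset

abbrev Impression.EligibleFor (i : Impression) (c : Conversion) : Prop :=
  i.time < c.time ∧ i.user = c.user ∧ i.adv = c.adv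

def lastTouch (l : List Impression) (c : Conversion) : Option Impression :=
  (l.filter fun i => decide (i.EligibleFor c)).getLast?

abbrev CapState := (Impression → ℝ) × ((Impression × Conversion) →₀ ℝ)

noncomputable def capStep : Option Impression → Conversion → CapState → CapState
  | none, _, st => st
  | some t, c, st =>
      if 1 ≤ st.1 t then (Function.update st.1 t (st.1 t - 1), st.2 + Finsupp.single (t, c) 1)
      else st

noncomputable def capRun (T : Conversion → Option Impression) (C : List Conversion)
    (st : CapState) : CapState :=
  C.foldl (fun st c => capStep (T c) c st) st

lemma applyPairs_zip_LTA (c : Conversion) (L : List Impression) (st : CapState) :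
    applyPairs (fun i => i) c (L.zip (LTA L c)) st = capStep L.getLast? c st := by
  induction L generalizing st with
  | nil => rfl
  | cons x xs ih =>
    cases xs with
    | nil => rfl
    | cons y t =>
      have hLTA : LTA (x :: y :: t) c = 0 :: LTA (y :: t) c := by
        simp [LTA, List.replicate_succ]
      rw [hLTA, List.zip_cons_cons, applyPairs, List.getLast?_cons_cons, ← ih]
      -- a zero-weight pair changes nothing, whether or not it is kept
      split_ifs <;> simp

lemma postAttr_LTA_eq_capRun (r : ℝ) (D : Dataset) :
    postAttr LTA (fun i => i) r D = (capRun (lastTouch D.imps) D.convs (fun _ => r, 0)).2 := by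
  simp only [postAttr, capRun, lastTouch, eligible, applyPairs_zip_LTA]

noncomputable def l1norm {α : Type*} (u : α →₀ ℝ) : ℝ := u.sum fun _ v => |v|

section l1norm

variable {α : Type*}

lemma l1norm_eq_sum_of_support_subset (u : α →₀ ℝ) {s : Finset α} (hs : u.support ⊆ s) :
    l1norm u = ∑ x ∈ s, |u x| :=
  Finsupp.sum_of_support_subset u hs _ fun _ _ => abs_zero

lemma l1norm_add_le [DecidableEq α] (u v : α →₀ ℝ) : l1norm (u + v) ≤ l1norm u + l1norm v := by
  rw [l1norm_eq_sum_of_support_subset _ Finsupp.support_add,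
    l1norm_eq_sum_of_support_subset u subset_union_left,
    l1norm_eq_sum_of_support_subset v subset_union_right, ← sum_add_distrib]
  exact sum_le_sum fun x _ => abs_add_le (u x) (v x)

lemma l1norm_neg (u : α →₀ ℝ) : l1norm (-u) = l1norm u := by
  rw [l1norm, Finsupp.sum_neg_index fun _ => abs_zero]
  simp only [abs_neg, l1norm]

end l1norm

section l1dist

variable (w w₁ w₂ : (Impression × Conversion) →₀ ℝ)

lemma l1dist_eq_l1norm : l1dist w₁ w₂ = l1norm (w₁ - w₂) := rfl

lemma l1dist_self : l1dist w w = 0 := by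
  simp [l1dist]

lemma l1dist_comm : l1dist w₁ w₂ = l1dist w₂ w₁ := by
  rw [l1dist_eq_l1norm, ← neg_sub, l1norm_neg, l1dist_eq_l1norm]

lemma l1dist_triangle : l1dist w w₂ ≤ l1dist w w₁ + l1dist w₁ w₂ := by
  classical
  simpa only [l1dist_eq_l1norm, sub_add_sub_cancel] using l1norm_add_le (w - w₁) (w₁ - w₂)

lemma l1dist_add_single_left (k : Impression × Conversion) (v : ℝ) :
    l1dist (w + Finsupp.single k v) w = |v| := by
  rw [l1dist, add_sub_cancel_left, Finsupp.sum_single_index abs_zero]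

end l1dist

section capStep

variable (o : Option Impression) (c : Conversion) (st st' : CapState)

lemma capStep_fst_le (x : Impression) : (capStep o c st).1 x ≤ st.1 x := by
  cases o with
  | none => rfl
  | some t =>
    simp only [capStep]
    split_ifs
    · rcases eq_or_ne x t with rfl | hx
      · simp
      · simp [hx]
    · rfl

lemma capStep_fst_nonneg (h : ∀ x, 0 ≤ st.1 x) (x : Impression) : 0 ≤ (capStep o c st).1 x := by
  cases o with
  | none => exact h x
  | some t =>
    simp only [capStep]
    split_ifs with hkeep
    · rcases eq_or_ne x t with rfl | hx
      · simpa using hkeep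
      · simpa [hx] using h x
    · exact h x

lemma capStep_fst_of_notMem {x : Impression} (hx : x ∉ o) : (capStep o c st).1 x = st.1 x := by
  cases o with
  | none => rfl
  | some t =>
    have hxt : x ≠ t := fun h => hx (h ▸ rfl)
    simp only [capStep]
    split_ifs <;> simp [hxt]

lemma capStep_congr (h : ∀ t ∈ o, st.1 t = st'.1 t) :
    (∀ x, st.1 x = st'.1 x → (capStep o c st).1 x = (capStep o c st').1 x) ∧
      (capStep o c st).2 - (capStep o c st').2 = st.2 - st'.2 := by
  cases o with
  | none => exact ⟨fun _ hx => hx, rfl⟩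
  | some t =>
    have ht := h t rfl
    simp only [capStep, ht]
    split_ifs
    · refine ⟨fun x hx => ?_, add_sub_add_right_eq_sub _ _ _⟩
      rcases eq_or_ne x t with rfl | hxt
      · simp
      · simpa [hxt] using hx
    · exact ⟨fun _ hx => hx, rfl⟩

lemma l1dist_capStep {A : Finset Impression} (hA : ∀ t ∈ o, t ∈ A) :
    l1dist (capStep o c st).2 st.2 = ∑ x ∈ A, (st.1 x - (capStep o c st).1 x) := by
  cases o with
  | none => simp [capStep, l1dist_self]
  | some t =>
    simp only [capStep]
    split_ifs
    · have hdiff : ∀ x, st.1 x - Function.update st.1 t (st.1 t - 1) x =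
          if x = t then 1 else 0 := fun x => by
        rcases eq_or_ne x t with rfl | hxt
        · simp
        · simp [hxt]
      simp [hdiff, l1dist_add_single_left, hA t rfl]
    · simp [l1dist_self]

end capStep

section capRun

variable (T T' : Conversion → Option Impression)

@[simp] lemma capRun_cons (c : Conversion) (C : List Conversion) (st : CapState) :
    capRun T (c :: C) st = capRun T C (capStep (T c) c st) := rfl

lemma capRun_append (C₁ C₂ : List Conversion) (st : CapState) :
    capRun T (C₁ ++ C₂) st = capRun T C₂ (capRun T C₁ st) :=
  List.foldl_append

lemma capRun_congr {C : List Conversion} (h : ∀ c ∈ C, T c = T' c) (st : CapState) :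
    capRun T C st = capRun T' C st :=
  List.foldl_ext _ _ _ fun st c hc => by rw [h c hc]

lemma capRun_fst_le (C : List Conversion) (st : CapState) (x : Impression) :
    (capRun T C st).1 x ≤ st.1 x := by
  induction C generalizing st with
  | nil => rfl
  | cons c C ih => exact (ih _).trans (capStep_fst_le _ _ _ x)

lemma capRun_fst_nonneg (C : List Conversion) {st : CapState} (h : ∀ x, 0 ≤ st.1 x)
    (x : Impression) : 0 ≤ (capRun T C st).1 x := by
  induction C generalizing st with
  | nil => exact h x
  | cons c C ih => exact ih (capStep_fst_nonneg _ _ _ h)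

end capRun

/-- Two runs are coupled when their budgets agree off `A ∪ A'` and their ℓ₁ gap is paid for by
the budget the first run has spent on `A` and the second on `A'`. -/
def Coupled (r : ℝ) (A A' : Finset Impression) (st st' : CapState) : Prop :=
  (∀ x, x ∉ A → x ∉ A' → st.1 x = st'.1 x) ∧
    l1dist st.2 st'.2 ≤ ∑ x ∈ A, (r - st.1 x) + ∑ x ∈ A', (r - st'.1 x)

def Routed (A A' : Finset Impression) (T T' : Conversion → Option Impression) (c : Conversion) :
    Prop :=
  ((∀ t ∈ T c, t ∈ A) ∧ ∀ t ∈ T' c, t ∈ A') ∨ (T c = T' c ∧ ∀ t ∈ T c, t ∉ A ∧ t ∉ A')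

namespace Coupled

variable {r : ℝ} {A A' : Finset Impression} {st st' : CapState}

lemma self (h : ∀ x, st.1 x ≤ r) : Coupled r A A' st st :=
  ⟨fun _ _ _ => rfl, by
    rw [l1dist_self]
    exact add_nonneg (sum_nonneg fun x _ => sub_nonneg.2 (h x))
      (sum_nonneg fun x _ => sub_nonneg.2 (h x))⟩

lemma capStep_routed (hst : Coupled r A A' st st') {o o' : Option Impression} (c : Conversion)
    (ho : ∀ t ∈ o, t ∈ A) (ho' : ∀ t ∈ o', t ∈ A') :
    Coupled r A A' (capStep o c st) (capStep o' c st') := by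
  refine ⟨fun x hxA hxA' => ?_, ?_⟩
  · rw [capStep_fst_of_notMem _ _ _ fun hx => hxA (ho x hx),
      capStep_fst_of_notMem _ _ _ fun hx => hxA' (ho' x hx)]
    exact hst.1 x hxA hxA'
  · have h₁ := l1dist_triangle (capStep o c st).2 st.2 (capStep o' c st').2
    have h₂ := l1dist_triangle st.2 st'.2 (capStep o' c st').2
    rw [l1dist_capStep o c st ho] at h₁
    rw [l1dist_comm st'.2, l1dist_capStep o' c st' ho'] at h₂
    have hspent : ∀ (B : Finset Impression) (b b' : Impression → ℝ),
        ∑ x ∈ B, (r - b' x) = ∑ x ∈ B, (r - b x) + ∑ x ∈ B, (b x - b' x) := fun B b b' => by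
      rw [← sum_add_distrib]; exact sum_congr rfl fun _ _ => by ring
    rw [hspent A st.1, hspent A' st'.1]
    linarith [hst.2]

lemma capStep_shared (hst : Coupled r A A' st st') {o : Option Impression} (c : Conversion)
    (ho : ∀ t ∈ o, t ∉ A ∧ t ∉ A') : Coupled r A A' (capStep o c st) (capStep o c st') := by
  obtain ⟨hfst, hsnd⟩ := capStep_congr o c st st' fun t ht => hst.1 t (ho t ht).1 (ho t ht).2
  have hA : ∀ B : Finset Impression, (∀ t ∈ o, t ∉ B) → ∀ s : CapState,
      ∑ x ∈ B, (r - (capStep o c s).1 x) = ∑ x ∈ B, (r - s.1 x) := fun B hB s =>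
    sum_congr rfl fun x hx => by rw [capStep_fst_of_notMem _ _ _ fun hxo => hB x hxo hx]
  refine ⟨fun x hxA hxA' => hfst x (hst.1 x hxA hxA'), ?_⟩
  rw [l1dist_eq_l1norm, hsnd, hA A (fun t ht => (ho t ht).1), hA A' (fun t ht => (ho t ht).2)]
  exact hst.2

lemma capRun {T T' : Conversion → Option Impression} {C : List Conversion}
    (hC : ∀ c ∈ C, Routed A A' T T' c) (hst : Coupled r A A' st st') :
    Coupled r A A' (capRun T C st) (capRun T' C st') := by
  induction C generalizing st st' with
  | nil => exact hst
  | cons c C ih =>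
    rw [_root_.capRun_cons, _root_.capRun_cons]
    refine ih (fun c' hc' => hC c' (List.mem_cons_of_mem c hc')) ?_
    rcases hC c List.mem_cons_self with ⟨ho, ho'⟩ | ⟨hT, ho⟩
    · exact hst.capStep_routed c ho ho'
    · rw [← hT]; exact hst.capStep_shared c ho

lemma l1dist_le (hst : Coupled r A A' st st') (h : ∀ x, 0 ≤ st.1 x) (h' : ∀ x, 0 ≤ st'.1 x) :
    l1dist st.2 st'.2 ≤ (#A + #A') * r := by
  have hbound : ∀ (B : Finset Impression) (b : Impression → ℝ), (∀ x, 0 ≤ b x) →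
      ∑ x ∈ B, (r - b x) ≤ #B * r := fun B b hb => by
    simpa using sum_le_sum fun x (_ : x ∈ B) => sub_le_self r (hb x)
  linarith [hst.2, hbound A st.1 h, hbound A' st'.1 h']

end Coupled

theorem l1dist_capRun_le {r : ℝ} (hr : 0 ≤ r) (A A' : Finset Impression)
    {T T' : Conversion → Option Impression} {C₁ C₂ : List Conversion}
    (h₁ : ∀ c ∈ C₁, T c = T' c) (h₂ : ∀ c ∈ C₂, Routed A A' T T' c) :
    l1dist (capRun T (C₁ ++ C₂) (fun _ => r, 0)).2 (capRun T' (C₁ ++ C₂) (fun _ => r, 0)).2 ≤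
      (#A + #A') * r := by
  rw [capRun_append, capRun_append, capRun_congr T T' h₁]
  set st := capRun T' C₁ (fun _ => r, 0)
  have hst : ∀ x, 0 ≤ st.1 x := capRun_fst_nonneg T' C₁ fun _ => hr
  exact ((Coupled.self (capRun_fst_le T' C₁ _)).capRun h₂).l1dist_le
    (capRun_fst_nonneg T C₂ hst) (capRun_fst_nonneg T' C₂ hst)

abbrev LastEligible (i0 : Impression) (l₂ : List Impression) (c : Conversion) : Prop :=
  i0.EligibleFor c ∧ ∀ i ∈ l₂, ¬ i.EligibleFor c

section lastTouch

variable {l₁ l₂ : List Impression} {i0 t : Impression} {c c₀ : Conversion}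

lemma mem_lastTouch (h : t ∈ lastTouch l₁ c) : t ∈ l₁ ∧ t.EligibleFor c := by
  simpa using List.mem_of_getLast? h

lemma lastTouch_append_of_forall_not (h : ∀ i ∈ l₂, ¬ i.EligibleFor c) :
    lastTouch (l₁ ++ l₂) c = lastTouch l₁ c := by
  have hnil : l₂.filter (fun i => decide (i.EligibleFor c)) = [] :=
    List.filter_eq_nil_iff.2 fun i hi => by simpa using h i hi
  rw [lastTouch, List.filter_append, hnil, List.append_nil]
  rfl

lemma lastTouch_append_of_exists (h : ∃ i ∈ l₂, i.EligibleFor c) :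
    lastTouch (l₁ ++ l₂) c = lastTouch l₂ c := by
  rw [lastTouch, List.filter_append, List.getLast?_append_of_ne_nil]
  · rfl
  · simpa [List.filter_eq_nil_iff] using h

lemma lastTouch_append_singleton :
    lastTouch (l₁ ++ [i0]) c = if i0.EligibleFor c then some i0 else lastTouch l₁ c := by
  by_cases h : i0.EligibleFor c <;> simp [lastTouch, List.filter_append, h]

lemma lastTouch_append_cons :
    lastTouch (l₁ ++ i0 :: l₂) c =
      if LastEligible i0 l₂ c then some i0 else lastTouch (l₁ ++ l₂) c := by
  rw [← List.singleton_append, ← List.append_assoc]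
  by_cases h₂ : ∀ i ∈ l₂, ¬ i.EligibleFor c
  · rw [lastTouch_append_of_forall_not h₂, lastTouch_append_of_forall_not h₂,
      lastTouch_append_singleton]
    exact if_congr (and_iff_left h₂).symm rfl rfl
  · have hlast : ¬ LastEligible i0 l₂ c := fun h => h₂ h.2
    simp only [not_forall, not_not, exists_prop] at h₂
    rw [if_neg hlast, lastTouch_append_of_exists h₂, lastTouch_append_of_exists h₂]

lemma lastTouch_append_cons_of_not_lastEligible (h : ¬ LastEligible i0 l₂ c) :
    lastTouch (l₁ ++ i0 :: l₂) c = lastTouch (l₁ ++ l₂) c := by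
  rw [lastTouch_append_cons, if_neg h]

/-- Up to `i0`, eligibility for a conversion that `i0` is eligible for only depends on user and
advertiser. -/
lemma lastTouch_eq_of_eligibleFor (hl₁ : ∀ i ∈ l₁, i.time ≤ i0.time) (h : i0.EligibleFor c)
    (h₀ : i0.EligibleFor c₀) : lastTouch l₁ c = lastTouch l₁ c₀ := by
  rw [lastTouch, lastTouch, List.filter_congr fun i hi => ?_]
  have := hl₁ i hi
  simp only [Impression.EligibleFor, decide_eq_decide] at h h₀ ⊢
  omega

lemma not_eligibleFor_of_mem_lastTouch (h₀ : LastEligible i0 l₂ c₀) (hc : c₀.time ≤ c.time)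
    (h : ¬ LastEligible i0 l₂ c) (ht : t ∈ lastTouch (l₁ ++ l₂) c) : ¬ t.EligibleFor c₀ := by
  intro htc₀
  obtain ⟨-, htu, hta⟩ := (mem_lastTouch ht).2
  obtain ⟨hi0t, hi0u, hi0a⟩ := h₀.1
  have hi0 : i0.EligibleFor c := ⟨by omega, by omega, by omega⟩
  have hl₂ : ∃ i ∈ l₂, i.EligibleFor c := by
    by_contra! hl₂
    exact h ⟨hi0, hl₂⟩
  rw [lastTouch_append_of_exists hl₂] at ht
  exact h₀.2 t (mem_lastTouch ht).1 htc₀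

lemma routed_of_lastEligible (hl₁ : ∀ i ∈ l₁, i.time ≤ i0.time) (h₀ : LastEligible i0 l₂ c₀)
    (hc : c₀.time ≤ c.time) :
    Routed (lastTouch l₁ c₀).toFinset {i0} (lastTouch (l₁ ++ l₂)) (lastTouch (l₁ ++ i0 :: l₂))
      c := by
  by_cases h : LastEligible i0 l₂ c
  · left
    rw [lastTouch_append_cons, if_pos h, lastTouch_append_of_forall_not h.2,
      lastTouch_eq_of_eligibleFor hl₁ h.1 h₀.1]
    exact ⟨fun t ht => Option.mem_toFinset.2 ht, fun t ht => by simpa using ht.symm⟩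
  · right
    rw [lastTouch_append_cons_of_not_lastEligible h]
    refine ⟨rfl, fun t ht => ?_⟩
    have htc₀ := not_eligibleFor_of_mem_lastTouch h₀ hc h ht
    exact ⟨fun htA => htc₀ (mem_lastTouch (Option.mem_toFinset.1 htA)).2,
      fun ht0 => htc₀ (Finset.mem_singleton.1 ht0 ▸ h₀.1)⟩

end lastTouch

theorem post_attr_impression_lta_valid_general (r : ℕ) (D D' : Dataset)
    (hD' : SortedDS D') (hadj : AddOneImpression D D') :
    l1dist (postAttr LTA (fun i => i) (r : ℝ) D)
      (postAttr LTA (fun i => i) (r : ℝ) D') ≤ 2 * (r : ℝ) := by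
  obtain ⟨i0, l₁, l₂, hD, hD'i, hC⟩ := hadj
  have hl₁ : ∀ i ∈ l₁, i.time ≤ i0.time := fun i hi =>
    (List.pairwise_append.1 (hD'i ▸ hD'.1)).2.2 i hi i0 List.mem_cons_self
  rw [postAttr_LTA_eq_capRun, postAttr_LTA_eq_capRun, hD, hD'i, hC]
  cases hfind : D'.convs.find? (fun c => decide (LastEligible i0 l₂ c)) with
  | none =>
    rw [capRun_congr _ _ fun c hc => (lastTouch_append_cons_of_not_lastEligible
      (by simpa using List.find?_eq_none.1 hfind c hc)).symm, l1dist_self]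
    positivity
  | some c₀ =>
    obtain ⟨h₀, C₁, C₂, hsplit, hC₁⟩ := List.find?_eq_some_iff_append.1 hfind
    have hsorted : ∀ c ∈ c₀ :: C₂, c₀.time ≤ c.time := List.forall_mem_cons.2
      ⟨le_rfl, (List.pairwise_cons.1 (List.pairwise_append.1 (hsplit ▸ hD'.2)).2.1).1⟩
    have hA : #(lastTouch l₁ c₀).toFinset ≤ 1 := by
      rw [Option.card_toFinset]; cases lastTouch l₁ c₀ <;> simp
    rw [hsplit]
    calc _ ≤ (#(lastTouch l₁ c₀).toFinset + #{i0}) * (r : ℝ) :=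
          l1dist_capRun_le r.cast_nonneg _ _
            (fun c hc => (lastTouch_append_cons_of_not_lastEligible
              (by simpa only [Bool.not_eq_true', decide_eq_false_iff_not] using hC₁ c hc)).symm)
            fun c hc => routed_of_lastEligible hl₁ (of_decide_eq_true h₀) (hsorted c hc)
      _ ≤ (1 + 1) * r := by gcongr <;> simp [hA]
      _ = 2 * r := by norm_num

/-- Theorem A.5: for last-touch attribution, the impression adjacency relation with
post-attribution contribution bound enforcement (bound `r`, per-impression scope) yields
attributed datasets at ℓ₁-distance at most `2r`. -/
theorem post_attr_impression_lta_valid (r : ℕ) (hr : 0 < r) (D D' : Dataset)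
    (hD' : SortedDS D') (hadj : AddOneImpression D D') :
    l1dist (postAttr LTA (fun i => i) (r : ℝ) D)
      (postAttr LTA (fun i => i) (r : ℝ) D') ≤ 2 * (r : ℝ) :=
  post_attr_impression_lta_valid_general r D D' hD' hadj
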